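/- arXiv:2507.17642 — 4 statements merged into one kernel-verified Lean document; each statement's English description precedes it below -/
import Mathlib

section
/- Let R ⊆ K[[t]] be a complete K-subalgebra with value semigroup Γ of finite complement in ℕ, and let H = ℕ \ Γ. For every n ∈ Γ there exists a unique element τ_n ∈ R of the form τ_n = t^n + Σ_{i ∈ H, i > n} c_i t^i with c_i ∈ K. -/
/-!
Uniqueness: the difference of two such series lies in `R`, and its coefficients vanish on `Γ`;
but the leading coefficient of a nonzero element of `R` sits at a point of `Γ`, so the
difference is zero. Existence: starting from an element of valuation `n`, kill the coefficient
at each successive `m ∈ Γ` with `m > n` by subtracting a multiple of an element of valuation `m`.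
This leaves all lower coefficients untouched, so the approximations converge `t`-adically, and
the limit lies in `R` because `R` is closed.
-/

/-- The `t`-adic valuation of a formal power series. -/
noncomputable def valt {K : Type*} [Semiring K] (f : PowerSeries K) : ℕ :=
  sInf {n | PowerSeries.coeff n f ≠ 0}

open PowerSeries

section Valuation

variable {K : Type*} [Semiring K] {f : PowerSeries K}

lemma coeff_valt_ne_zero (hf : f ≠ 0) : coeff (valt f) f ≠ 0 := by
  obtain ⟨m, hm⟩ : ∃ m, coeff m f ≠ 0 := by
    by_contra! h
    exact hf (ext fun m => by simp [h])
  exact Nat.sInf_mem (s := {n | coeff n f ≠ 0}) ⟨m, hm⟩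

lemma coeff_of_lt_valt {m : ℕ} (hm : m < valt f) : coeff m f = 0 := by
  by_contra h
  exact (Nat.sInf_le h).not_gt hm

end Valuation

section ValueSemigroup

variable {K : Type*} [CommSemiring K] (R : Subalgebra K (PowerSeries K))

def valueSemigroup : Set ℕ := {n | ∃ g ∈ R, g ≠ 0 ∧ valt g = n}

variable {R}

lemma coeff_eq_zero_of_forall_mem_valueSemigroup {g : PowerSeries K} (hg : g ∈ R) {N : ℕ}
    (h : ∀ i ∈ valueSemigroup R, i ≤ N → coeff i g = 0) {i : ℕ} (hi : i ≤ N) :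
    coeff i g = 0 := by
  by_cases hg0 : g = 0
  · simp [hg0]
  have hNv : N < valt g := by
    by_contra! hvN
    exact coeff_valt_ne_zero hg0 (h _ ⟨g, hg, hg0, rfl⟩ hvN)
  exact coeff_of_lt_valt (hi.trans_lt hNv)

end ValueSemigroup

lemma exists_coeff_eq_one_of_mem_valueSemigroup {K : Type*} [Field K]
    {R : Subalgebra K (PowerSeries K)} {m : ℕ} (hm : m ∈ valueSemigroup R) :
    ∃ e ∈ R, coeff m e = 1 ∧ ∀ i < m, coeff i e = 0 := by
  obtain ⟨g, hgR, hg0, rfl⟩ := hm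
  have hc : coeff (valt g) g ≠ 0 := coeff_valt_ne_zero hg0
  refine ⟨(coeff (valt g) g)⁻¹ • g, R.smul_mem hgR _, ?_, fun i hi => ?_⟩
  · rw [coeff_smul, smul_eq_mul, inv_mul_cancel₀ hc]
  · rw [coeff_smul, coeff_of_lt_valt hi, smul_zero]

section Reduced

variable {K : Type*}

/-- `g` has the shape `t^n + Σ_{i > n} c_i t^i` with `c_i = 0` for `i ∈ Γ`, as far as the
coefficients of index at most `N` are concerned. -/
def IsReducedUpTo [Semiring K] (Γ : Set ℕ) (n N : ℕ) (g : PowerSeries K) : Prop :=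
  coeff n g = 1 ∧ (∀ i < n, coeff i g = 0) ∧ ∀ i ∈ Γ, n < i → i ≤ N → coeff i g = 0

namespace IsReducedUpTo

variable [Semiring K] {Γ : Set ℕ} {n N M : ℕ} {g g' : PowerSeries K}

lemma mono (h : IsReducedUpTo Γ n M g) (hNM : N ≤ M) : IsReducedUpTo Γ n N g :=
  ⟨h.1, h.2.1, fun i hiΓ hni hiN => h.2.2 i hiΓ hni (hiN.trans hNM)⟩

lemma congr (h : IsReducedUpTo Γ n N g) (hgg' : ∀ i ≤ n + N, coeff i g' = coeff i g) :
    IsReducedUpTo Γ n N g' :=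
  ⟨by rw [hgg' n (by omega), h.1], fun i hi => by rw [hgg' i (by omega), h.2.1 i hi],
    fun i hiΓ hni hiN => by rw [hgg' i (by omega), h.2.2 i hiΓ hni hiN]⟩

end IsReducedUpTo

lemma forall_isReducedUpTo_iff [Semiring K] {Γ : Set ℕ} {n : ℕ} {g : PowerSeries K} :
    (∀ N, IsReducedUpTo Γ n N g) ↔
      coeff n g = 1 ∧ ∀ i, i ≠ n → coeff i g ≠ 0 → i ∈ Γᶜ ∧ n < i := by
  constructor
  · intro h
    refine ⟨(h 0).1, fun i hin hi => ?_⟩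
    have hni : n < i := by
      by_contra! hin'
      exact hi ((h 0).2.1 i (lt_of_le_of_ne hin' hin))
    exact ⟨fun hiΓ => hi ((h i).2.2 i hiΓ hni le_rfl), hni⟩
  · rintro ⟨h1, h⟩ N
    refine ⟨h1, fun i hi => ?_, fun i hiΓ hni _ => ?_⟩
    · by_contra hne
      exact (h i hi.ne hne).2.asymm hi
    · by_contra hne
      exact (h i hni.ne' hne).1 hiΓ

lemma IsReducedUpTo.coeff_eq [CommRing K] {R : Subalgebra K (PowerSeries K)} {n N : ℕ}
    {g g' : PowerSeries K} (hgR : g ∈ R) (hg'R : g' ∈ R)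
    (hg : IsReducedUpTo (valueSemigroup R) n N g) (hg' : IsReducedUpTo (valueSemigroup R) n N g')
    {i : ℕ} (hi : i ≤ N) : coeff i g = coeff i g' := by
  rw [← sub_eq_zero, ← map_sub]
  refine coeff_eq_zero_of_forall_mem_valueSemigroup (R.sub_mem hgR hg'R) (fun j hjΓ hjN => ?_) hi
  rw [map_sub, sub_eq_zero]
  rcases lt_trichotomy j n with hjn | rfl | hnj
  · rw [hg.2.1 j hjn, hg'.2.1 j hjn]
  · rw [hg.1, hg'.1]
  · rw [hg.2.2 j hjΓ hnj hjN, hg'.2.2 j hjΓ hnj hjN]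

lemma eq_of_forall_isReducedUpTo [CommRing K] {R : Subalgebra K (PowerSeries K)} {n : ℕ}
    {g g' : PowerSeries K} (hgR : g ∈ R) (hg'R : g' ∈ R)
    (hg : ∀ N, IsReducedUpTo (valueSemigroup R) n N g)
    (hg' : ∀ N, IsReducedUpTo (valueSemigroup R) n N g') : g = g' :=
  ext fun i => (hg i).coeff_eq hgR hg'R (hg' i) le_rfl

lemma exists_isReducedUpTo [Field K] {R : Subalgebra K (PowerSeries K)} {n : ℕ}
    (hn : n ∈ valueSemigroup R) (N : ℕ) :
    ∃ g ∈ R, IsReducedUpTo (valueSemigroup R) n N g := by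
  induction N with
  | zero =>
    obtain ⟨e, heR, he1, he0⟩ := exists_coeff_eq_one_of_mem_valueSemigroup hn
    exact ⟨e, heR, he1, he0, fun i _ hni hi0 => absurd hni (by omega)⟩
  | succ N ih =>
    obtain ⟨g, hgR, hg1, hg0, hgΓ⟩ := ih
    by_cases hN : N + 1 ∈ valueSemigroup R ∧ n < N + 1
    · obtain ⟨e, heR, he1, he0⟩ := exists_coeff_eq_one_of_mem_valueSemigroup hN.1
      have hcoeff : ∀ i,
          coeff i (g - coeff (N + 1) g • e) = coeff i g - coeff (N + 1) g * coeff i e :=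
        fun i => by rw [map_sub, coeff_smul, smul_eq_mul]
      refine ⟨g - coeff (N + 1) g • e, R.sub_mem hgR (R.smul_mem heR _), ?_, fun i hi => ?_,
        fun i hiΓ hni hiN => ?_⟩
      · rw [hcoeff, he0 n hN.2, mul_zero, sub_zero, hg1]
      · rw [hcoeff, he0 i (by omega), mul_zero, sub_zero, hg0 i hi]
      · rcases hiN.lt_or_eq with hiN | rfl
        · rw [hcoeff, he0 i hiN, mul_zero, sub_zero, hgΓ i hiΓ hni (by omega)]
        · rw [hcoeff, he1, mul_one, sub_self]
    · refine ⟨g, hgR, hg1, hg0, fun i hiΓ hni hiN => ?_⟩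
      rcases hiN.lt_or_eq with hiN | rfl
      · exact hgΓ i hiΓ hni (by omega)
      · exact absurd ⟨hiΓ, hni⟩ hN

end Reduced

theorem stmt6_general {K : Type*} [Field K] (R : Subalgebra K (PowerSeries K))
    (hclosed : ∀ f : PowerSeries K,
      (∀ n : ℕ, ∃ g ∈ R, ∀ m ≤ n, PowerSeries.coeff m g = PowerSeries.coeff m f) →
        f ∈ R)
    (Γ : Set ℕ) (hΓ : Γ = {n | ∃ g ∈ R, g ≠ 0 ∧ valt g = n})
    (n : ℕ) (hn : n ∈ Γ) :
    ∃! τ : PowerSeries K, τ ∈ R ∧ PowerSeries.coeff n τ = 1 ∧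
      ∀ i : ℕ, i ≠ n → PowerSeries.coeff i τ ≠ 0 → i ∈ (Γᶜ : Set ℕ) ∧ n < i := by
  subst hΓ
  choose g hgR hg using exists_isReducedUpTo (R := R) hn
  have hτg : ∀ N, ∀ i ≤ N, coeff i (mk fun j => coeff j (g j)) = coeff i (g N) :=
    fun N i hi => by rw [coeff_mk, ((hg N).mono hi).coeff_eq (hgR N) (hgR i) (hg i) le_rfl]
  set τ := mk fun j => coeff j (g j)
  have hτR : τ ∈ R := hclosed τ fun N => ⟨g N, hgR N, fun i hi => (hτg N i hi).symm⟩
  have hτ : ∀ N, IsReducedUpTo (valueSemigroup R) n N τ :=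
    fun N => ((hg (n + N)).mono (by omega)).congr (hτg (n + N))
  exact ⟨τ, ⟨hτR, forall_isReducedUpTo_iff.mp hτ⟩, fun τ' ⟨hτ'R, hτ'⟩ =>
    eq_of_forall_isReducedUpTo hτ'R hτR (forall_isReducedUpTo_iff.mpr hτ') hτ⟩

/-- In a subalgebra `R ⊆ K[[t]]` closed in the `t`-adic topology with value semigroup `Γ`
of finite complement `H`, every `n ∈ Γ` is the valuation of a unique element of the form
`τ_n = t^n + Σ_{i ∈ H, i > n} c_i t^i`. -/
theorem stmt6 {K : Type*} [Field K] (R : Subalgebra K (PowerSeries K))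
    (hclosed : ∀ f : PowerSeries K,
      (∀ n : ℕ, ∃ g ∈ R, ∀ m ≤ n, PowerSeries.coeff m g = PowerSeries.coeff m f) →
        f ∈ R)
    (Γ : Set ℕ) (hΓ : Γ = {n | ∃ g ∈ R, g ≠ 0 ∧ valt g = n})
    (hfin : (Γᶜ : Set ℕ).Finite) (n : ℕ) (hn : n ∈ Γ) :
    ∃! τ : PowerSeries K, τ ∈ R ∧ PowerSeries.coeff n τ = 1 ∧
      ∀ i : ℕ, i ≠ n → PowerSeries.coeff i τ ≠ 0 → i ∈ (Γᶜ : Set ℕ) ∧ n < i :=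
  stmt6_general R hclosed Γ hΓ n hn
end

section
/- Let R ⊆ K[[t]] be a K-subalgebra with value semigroup Γ of finite complement in ℕ and let I ⊆ R be a nonzero ideal of colength n generated by g_1, …, g_k with valuations n_1 ≤ … ≤ n_k forming an independent k-tuple (n_i ∉ val_t of the ideal generated by the other g_j's). If g'_1, …, g'_k is another minimal generating set of I whose valuations n'_1 ≤ … ≤ n'_k also form an independent k-tuple, then n_i = n'_i for all i. -/
/-- The set of valuations attained by nonzero elements of an ideal `J ⊆ R ⊆ K[[t]]`. -/
noncomputable def idealVals {K : Type*} [Field K] {R : Subalgebra K (PowerSeries K)}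
    (J : Ideal R) : Set ℕ :=
  {n | ∃ g : R, g ∈ J ∧ (g : PowerSeries K) ≠ 0 ∧ valt (g : PowerSeries K) = n}

open PowerSeries

namespace PowerSeries

variable {R : Type*} [Ring R]

theorem order_add_of_lt {φ ψ : R⟦X⟧} (h : φ.order < ψ.order) : (φ + ψ).order = φ.order := by
  rw [order_add_of_order_ne _ _ h.ne, min_eq_left h.le]

theorem order_sub_of_lt {φ ψ : R⟦X⟧} (h : φ.order < ψ.order) : (φ - ψ).order = φ.order := by
  rw [sub_eq_add_neg, order_add_of_lt (by rwa [order_neg])]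

theorem sum_eq_zero_or_exists_order_sum_eq {ι : Type*} (s : Finset ι) (a : ι → R⟦X⟧)
    (ha : ∀ i j, a i ≠ 0 → (a i).order = (a j).order → i = j) :
    ∑ i ∈ s, a i = 0 ∨ ∃ j ∈ s, (∑ i ∈ s, a i).order = (a j).order := by
  classical
  induction s using Finset.induction_on with
  | empty => simp
  | insert i s hi ih =>
    rw [Finset.sum_insert hi]
    by_cases hai : a i = 0
    · rw [hai, zero_add]
      exact ih.imp_right fun ⟨j, hj, hord⟩ => ⟨j, Finset.mem_insert_of_mem hj, hord⟩
    right
    rcases ih with hzero | ⟨j, hj, hord⟩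
    · exact ⟨i, Finset.mem_insert_self i s, by rw [hzero, add_zero]⟩
    have hne : (a i).order ≠ (∑ i ∈ s, a i).order := fun h =>
      hi (ha i j hai (h.trans hord) ▸ hj)
    rw [order_add_of_order_ne _ _ hne]
    rcases min_choice (a i).order (∑ i ∈ s, a i).order with hmin | hmin
    · exact ⟨i, Finset.mem_insert_self i s, hmin⟩
    · exact ⟨j, Finset.mem_insert_of_mem hj, hmin.trans hord⟩

theorem order_smul_of_ne_zero {K : Type*} [Field K] {c : K} (hc : c ≠ 0) (φ : K⟦X⟧) :
    (c • φ).order = φ.order := by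
  refine le_antisymm ?_ le_order_smul
  simpa [smul_smul, inv_mul_cancel₀ hc] using le_order_smul (a := c⁻¹) (φ := c • φ)

end PowerSeries

theorem Ideal.exists_sum_of_mem_mul_span_range {A ι : Type*} [CommRing A] [Fintype ι]
    {J : Ideal A} {g : ι → A} {x : A} (hx : x ∈ J * Ideal.span (Set.range g)) :
    ∃ r : ι → A, (∀ i, r i ∈ J) ∧ ∑ i, r i * g i = x := by
  rw [← Ideal.smul_eq_mul, Ideal.span, Submodule.mem_ideal_smul_span_iff_exists_sum] at hx
  obtain ⟨r, hr, rfl⟩ := hx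
  exact ⟨r, hr, by rw [Finsupp.sum_fintype _ _ fun i => zero_smul A (g i)]; rfl⟩

theorem order_eq_valt {R : Type*} [Semiring R] {f : R⟦X⟧} (hf : f ≠ 0) :
    f.order = valt f := by
  have hne : {n | coeff n f ≠ 0}.Nonempty := ⟨_, coeff_order hf⟩
  exact order_eq_nat.2 ⟨Nat.sInf_mem hne, fun i hi => by
    by_contra h
    exact Nat.notMem_of_lt_sInf hi h⟩

section Subalgebra

variable {K : Type*} [Field K] {R : Subalgebra K K⟦X⟧}

theorem mem_idealVals_iff {J : Ideal R} {n : ℕ} :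
    n ∈ idealVals J ↔ ∃ x ∈ J, (x : K⟦X⟧).order = n := by
  constructor
  · rintro ⟨x, hx, hx0, rfl⟩
    exact ⟨x, hx, order_eq_valt hx0⟩
  · rintro ⟨x, hx, hord⟩
    have hx0 : (x : K⟦X⟧) ≠ 0 := fun h0 => by simp [h0] at hord
    exact ⟨x, hx, hx0, by exact_mod_cast (order_eq_valt hx0).symm.trans hord⟩

variable (R) in
/-- The paper's `𝔪`, the maximal ideal of `R` when `R` is local (e.g. complete). -/
noncomputable def constantCoeffKer : Ideal R :=
  RingHom.ker ((constantCoeff : K⟦X⟧ →+* K).comp (R.val : R →+* K⟦X⟧))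

theorem one_le_order_of_mem_constantCoeffKer {x : R} (hx : x ∈ constantCoeffKer R) :
    1 ≤ (x : K⟦X⟧).order :=
  one_le_order_iff_constCoeff_eq_zero.2 hx

theorem exists_sub_sum_smul_mem_constantCoeffKer_mul {ι : Type*} [Fintype ι] {g : ι → R} {x : R}
    (hx : x ∈ Ideal.span (Set.range g)) :
    ∃ κ : ι → K, x - ∑ i, κ i • g i ∈ constantCoeffKer R * Ideal.span (Set.range g) := by
  rw [Ideal.span, Submodule.mem_span_range_iff_exists_fun] at hx
  obtain ⟨c, rfl⟩ := hx
  refine ⟨fun i => constantCoeff (c i : K⟦X⟧), ?_⟩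
  rw [← Finset.sum_sub_distrib]
  refine Ideal.sum_mem _ fun i _ => ?_
  rw [smul_eq_mul, ← algebraMap_smul R, smul_eq_mul, ← sub_mul]
  refine Ideal.mul_mem_mul ?_ (Ideal.subset_span (Set.mem_range_self i))
  simp [constantCoeffKer, RingHom.mem_ker]

/-- `idealVals` of the span of the other generators is the paper's `Δ_{g_i}`. -/
def IsValtIndependent {ι : Type*} (g : ι → R) : Prop :=
  ∀ i, valt (g i : K⟦X⟧) ∉ idealVals (Ideal.span {x : R | ∃ j, j ≠ i ∧ g j = x})

namespace IsValtIndependent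

variable {ι : Type*} {g : ι → R}

theorem order_ne (hind : IsValtIndependent g) {i : ι} {x : R}
    (hx : x ∈ Ideal.span {x : R | ∃ j, j ≠ i ∧ g j = x}) :
    (x : K⟦X⟧).order ≠ valt (g i : K⟦X⟧) :=
  fun h => hind i (mem_idealVals_iff.2 ⟨x, hx, h⟩)

theorem injective (hind : IsValtIndependent g) (hg0 : ∀ i, (g i : K⟦X⟧) ≠ 0) :
    Function.Injective fun i => valt (g i : K⟦X⟧) := by
  intro i j hij
  by_contra hne
  exact hind.order_ne (Ideal.subset_span ⟨j, Ne.symm hne, rfl⟩)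
    ((order_eq_valt (hg0 j)).trans (congrArg _ hij.symm))

theorem valt_notMem_idealVals_mul [Fintype ι] (hind : IsValtIndependent g)
    (hg0 : ∀ i, (g i : K⟦X⟧) ≠ 0) (i : ι) :
    valt (g i : K⟦X⟧) ∉ idealVals (constantCoeffKer R * Ideal.span (Set.range g)) := by
  classical
  rw [mem_idealVals_iff]
  rintro ⟨h, hh, hord⟩
  obtain ⟨r, hr, rfl⟩ := Ideal.exists_sum_of_mem_mul_span_range hh
  set u := ∑ j ∈ Finset.univ.erase i, r j * g j
  have hu : u ∈ Ideal.span {x : R | ∃ j, j ≠ i ∧ g j = x} :=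
    Ideal.sum_mem _ fun j hj =>
      Ideal.mul_mem_left _ _ (Ideal.subset_span ⟨j, Finset.ne_of_mem_erase hj, rfl⟩)
  have hu_eq : u = ∑ j, r j * g j - r i * g i :=
    eq_sub_of_add_eq (Finset.sum_erase_add _ _ (Finset.mem_univ i))
  -- `r i` has positive order, so `r i * g i` is invisible at order `valt (g i)`
  have hlt : ((∑ j, r j * g j : R) : K⟦X⟧).order < ((r i * g i : R) : K⟦X⟧).order := by
    rw [hord, MulMemClass.coe_mul, order_mul, order_eq_valt (hg0 i)]
    calc (valt (g i : K⟦X⟧) : ℕ∞) < valt (g i : K⟦X⟧) + 1 := by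
          exact_mod_cast Nat.lt_succ_self _
      _ ≤ (r i : K⟦X⟧).order + valt (g i : K⟦X⟧) := by
          rw [add_comm]
          gcongr
          exact one_le_order_of_mem_constantCoeffKer (hr i)
  refine hind.order_ne hu ?_
  rw [hu_eq, Subalgebra.coe_sub, order_sub_of_lt hlt, hord]

theorem sum_smul_eq_zero_or_exists_order_eq (hind : IsValtIndependent g)
    (hg0 : ∀ i, (g i : K⟦X⟧) ≠ 0) (s : Finset ι) (κ : ι → K) :
    ∑ i ∈ s, κ i • g i = 0 ∨ ∃ j, ((∑ i ∈ s, κ i • g i : R) : K⟦X⟧).order = valt (g j : K⟦X⟧) := by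
  have horder : ∀ i, κ i ≠ 0 → (κ i • (g i : K⟦X⟧)).order = valt (g i : K⟦X⟧) := fun i hκ => by
    rw [order_smul_of_ne_zero hκ, order_eq_valt (hg0 i)]
  have hκ : ∀ i, κ i • (g i : K⟦X⟧) ≠ 0 → κ i ≠ 0 := fun i h hκ => h (by rw [hκ, zero_smul])
  have hcoe : ((∑ i ∈ s, κ i • g i : R) : K⟦X⟧) = ∑ i ∈ s, κ i • (g i : K⟦X⟧) := by
    push_cast
    rfl
  have hdistinct : ∀ i j, κ i • (g i : K⟦X⟧) ≠ 0 →
      (κ i • (g i : K⟦X⟧)).order = (κ j • (g j : K⟦X⟧)).order → i = j := by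
    intro i j hi hij
    have hj : κ j • (g j : K⟦X⟧) ≠ 0 := fun h0 => by
      rw [h0, order_zero, horder i (hκ i hi)] at hij
      exact ENat.natCast_ne_top _ hij
    rw [horder i (hκ i hi), horder j (hκ j hj)] at hij
    exact hind.injective hg0 (by exact_mod_cast hij)
  rcases sum_eq_zero_or_exists_order_sum_eq s _ hdistinct with h0 | ⟨j, -, hj⟩
  · exact Or.inl (Subtype.ext (hcoe.trans h0))
  by_cases hκj : κ j = 0
  · refine Or.inl (Subtype.ext (hcoe.trans (order_eq_top.1 ?_)))
    rw [hj, hκj, zero_smul, order_zero]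
  · exact Or.inr ⟨j, by rw [hcoe, hj, horder j hκj]⟩

theorem range_valt_eq [Fintype ι] (hind : IsValtIndependent g) (hg0 : ∀ i, (g i : K⟦X⟧) ≠ 0) :
    Set.range (fun i => valt (g i : K⟦X⟧)) =
      idealVals (Ideal.span (Set.range g)) \
        idealVals (constantCoeffKer R * Ideal.span (Set.range g)) := by
  ext n
  constructor
  · rintro ⟨i, rfl⟩
    exact ⟨⟨g i, Ideal.subset_span (Set.mem_range_self i), hg0 i, rfl⟩,
      hind.valt_notMem_idealVals_mul hg0 i⟩
  rintro ⟨hn, hnm⟩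
  obtain ⟨h, hh, hord⟩ := mem_idealVals_iff.1 hn
  obtain ⟨κ, hκ⟩ := exists_sub_sum_smul_mem_constantCoeffKer_mul hh
  set s := ∑ i, κ i • g i
  rcases hind.sum_smul_eq_zero_or_exists_order_eq hg0 Finset.univ κ with hs | ⟨j, hj⟩
  · rw [show s = 0 from hs, sub_zero] at hκ
    exact absurd (mem_idealVals_iff.2 ⟨h, hκ, hord⟩) hnm
  refine ⟨j, ?_⟩
  by_contra hne
  -- `h - s` lies in `𝔪 I` and its order is the smaller of `n` and `valt (g j)`
  rcases lt_or_gt_of_ne hne with hlt | hgt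
  · refine hind.valt_notMem_idealVals_mul hg0 j (mem_idealVals_iff.2 ⟨s - h, ?_, ?_⟩)
    · rw [← neg_sub]
      exact neg_mem hκ
    · rw [Subalgebra.coe_sub, order_sub_of_lt (by rw [hj, hord]; exact_mod_cast hlt), hj]
  · refine hnm (mem_idealVals_iff.2 ⟨h - s, hκ, ?_⟩)
    rw [Subalgebra.coe_sub, order_sub_of_lt (by rw [hj, hord]; exact_mod_cast hgt), hord]

end IsValtIndependent

end Subalgebra

theorem stmt10_general {K : Type*} [Field K] (R : Subalgebra K (PowerSeries K))
    (k : ℕ) (I : Ideal R)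
    (g g' : Fin k → R)
    (hgI : Ideal.span (Set.range g) = I) (hg'I : Ideal.span (Set.range g') = I)
    (hg0 : ∀ i, (g i : PowerSeries K) ≠ 0) (hg'0 : ∀ i, (g' i : PowerSeries K) ≠ 0)
    (hmono : Monotone fun i => valt (g i : PowerSeries K))
    (hmono' : Monotone fun i => valt (g' i : PowerSeries K))
    (hind : ∀ i, valt (g i : PowerSeries K) ∉
      idealVals (Ideal.span {x : R | ∃ j, j ≠ i ∧ g j = x}))
    (hind' : ∀ i, valt (g' i : PowerSeries K) ∉
      idealVals (Ideal.span {x : R | ∃ j, j ≠ i ∧ g' j = x})) :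
    ∀ i, valt (g i : PowerSeries K) = valt (g' i : PowerSeries K) := by
  have hind : IsValtIndependent g := hind
  have hind' : IsValtIndependent g' := hind'
  have hrange : Set.range (fun i => valt (g i : K⟦X⟧)) =
      Set.range (fun i => valt (g' i : K⟦X⟧)) := by
    rw [hind.range_valt_eq hg0, hind'.range_valt_eq hg'0, hgI, hg'I]
  have hsm := hmono.strictMono_of_injective (hind.injective hg0)
  have hsm' := hmono'.strictMono_of_injective (hind'.injective hg'0)
  exact congrFun ((hsm.range_inj hsm').1 hrange)

/-- Uniqueness of the independent tuple of valuations: two minimal generating sets of the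
same ideal whose (sorted) valuation tuples are both independent have the same valuations. -/
theorem stmt10 {K : Type*} [Field K] (R : Subalgebra K (PowerSeries K))
    (hfin : ({n | ∃ g ∈ R, g ≠ 0 ∧ valt g = n}ᶜ : Set ℕ).Finite)
    (k : ℕ) (I : Ideal R) (hI : I ≠ ⊥)
    (g g' : Fin k → R)
    (hgI : Ideal.span (Set.range g) = I) (hg'I : Ideal.span (Set.range g') = I)
    (hg0 : ∀ i, (g i : PowerSeries K) ≠ 0) (hg'0 : ∀ i, (g' i : PowerSeries K) ≠ 0)
    (hmin : ∀ i, g i ∉ Ideal.span {x : R | ∃ j, j ≠ i ∧ g j = x})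
    (hmin' : ∀ i, g' i ∉ Ideal.span {x : R | ∃ j, j ≠ i ∧ g' j = x})
    (hmono : Monotone fun i => valt (g i : PowerSeries K))
    (hmono' : Monotone fun i => valt (g' i : PowerSeries K))
    (hind : ∀ i, valt (g i : PowerSeries K) ∉
      idealVals (Ideal.span {x : R | ∃ j, j ≠ i ∧ g j = x}))
    (hind' : ∀ i, valt (g' i : PowerSeries K) ∉
      idealVals (Ideal.span {x : R | ∃ j, j ≠ i ∧ g' j = x})) :
    ∀ i, valt (g i : PowerSeries K) = valt (g' i : PowerSeries K) :=
  stmt10_general R k I g g' hgI hg'I hg0 hg'0 hmono hmono' hind hind'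
end

section
/- Let Γ = ⟨p, q⟩ be the numerical semigroup generated by coprime p, q ≥ 2, δ = |ℕ \ Γ|, and let n_1 ≤ … ≤ n_k be elements of Γ such that the union Γ_n = ⋃_i (n_i + Γ) is not covered by any proper subfamily (independence). Then |Γ \ Γ_n| = n_1 − δ + |ℕ \ ⋃_i ((n_i − n_1) + Γ)|. -/
/-!
Write `n₀ = n_1` and `U = ⋃ᵢ ((nᵢ - n₀) + Γ)`, so that `Γ_n = n₀ + U`. Since `Γ_n ⊆ Γ`, the
complement of `Γ_n` splits into `Γ \ Γ_n` and the `δ` gaps of `Γ`; on the other hand it consists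
of `[0, n₀)` and of `n₀ + (ℕ \ U)`. Comparing the two counts gives the formula; all sets involved
are cofinite because `Γ ⊆ U` and `gcd(p, q) = 1`.
-/

open Set

theorem Set.ncard_sdiff_add_ncard_compl_of_subset {α : Type*} {s t : Set α} (hts : t ⊆ s)
    (ht : tᶜ.Finite) : (s \ t).ncard + sᶜ.ncard = tᶜ.ncard := by
  rw [← compl_sdiff_compl]
  exact ncard_sdiff_add_ncard_of_subset (compl_subset_compl.2 hts) ht

theorem AddSubmonoid.iUnion_image_add_subset {M ι : Type*} [AddMonoid M] (S : AddSubmonoid M)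
    {n : ι → M} (hn : ∀ i, n i ∈ S) : ⋃ i, (fun γ => n i + γ) '' (S : Set M) ⊆ S := by
  simp only [iUnion_subset_iff, image_subset_iff]
  exact fun i γ hγ => S.add_mem (hn i) hγ

namespace Nat

theorem setOf_add_mul_eq_closure_pair (p q : ℕ) :
    {m | ∃ a b : ℕ, m = a * p + b * q} = (AddSubmonoid.closure {p, q} : Set ℕ) := by
  ext m
  simp only [mem_ofPred_eq, SetLike.mem_coe, AddSubmonoid.mem_closure_pair, smul_eq_mul, eq_comm]

theorem finite_compl_closure_pair {p q : ℕ} (hpq : p.Coprime q) :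
    (AddSubmonoid.closure {p, q} : Set ℕ)ᶜ.Finite := by
  obtain ⟨N, hN⟩ := exists_mem_closure_of_ge ({p, q} : Set ℕ)
  have hgcd : setGcd {p, q} ∣ 1 :=
    hpq ▸ Nat.dvd_gcd (setGcd_dvd_of_mem (by simp)) (setGcd_dvd_of_mem (by simp))
  refine (finite_Iio N).subset fun m hm => ?_
  by_contra hmN
  exact hm (hN m (not_lt.1 hmN) (hgcd.trans (one_dvd m)))

theorem compl_image_add_left (a : ℕ) (U : Set ℕ) :
    ((fun x => a + x) '' U)ᶜ = Iio a ∪ (fun x => a + x) '' Uᶜ := by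
  ext x
  simp only [mem_compl_iff, mem_union, mem_Iio, mem_image]
  constructor
  · intro hx
    by_cases hxa : x < a
    · exact .inl hxa
    · exact .inr ⟨x - a, fun hU => hx ⟨x - a, hU, by omega⟩, by omega⟩
  · rintro (hxa | ⟨y, hy, rfl⟩) ⟨z, hz, hzx⟩
    · omega
    · exact hy (add_left_cancel hzx ▸ hz)

theorem finite_compl_image_add_left (a : ℕ) {U : Set ℕ} (hU : Uᶜ.Finite) :
    ((fun x => a + x) '' U)ᶜ.Finite := by
  rw [compl_image_add_left]
  exact (finite_Iio a).union (hU.image _)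

theorem ncard_compl_image_add_left (a : ℕ) {U : Set ℕ} (hU : Uᶜ.Finite) :
    ((fun x => a + x) '' U)ᶜ.ncard = a + Uᶜ.ncard := by
  have hdisj : Disjoint (Iio a) ((fun x => a + x) '' Uᶜ) := by
    rw [disjoint_left]
    rintro x hx ⟨y, -, rfl⟩
    exact (mem_Iio.1 hx).not_ge (Nat.le_add_right a y)
  rw [compl_image_add_left, ncard_union_eq hdisj (finite_Iio a) (hU.image _),
    ncard_image_of_injective _ (add_right_injective a), ← Finset.coe_Iio,
    ncard_coe_finset, card_Iio]

theorem iUnion_image_add_eq_image_iUnion {ι : Type*} (S : Set ℕ) {n : ι → ℕ} {a : ℕ}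
    (ha : ∀ i, a ≤ n i) :
    ⋃ i, (fun γ => n i + γ) '' S = (fun x => a + x) '' ⋃ i, (fun γ => (n i - a) + γ) '' S := by
  simp only [image_iUnion, image_image]
  refine iUnion_congr fun i => image_congr fun γ _ => ?_
  have := ha i
  omega

end Nat

theorem stmt12_general (p q : ℕ) (hpq : Nat.Coprime p q)
    (Γ : Set ℕ) (hΓ : Γ = {m | ∃ a b : ℕ, m = a * p + b * q})
    (δ : ℕ) (hδ : δ = (Γᶜ : Set ℕ).ncard)
    (k : ℕ) (hk : 0 < k) (n : Fin k → ℕ) (hnΓ : ∀ i, n i ∈ Γ)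
    (hmono : Monotone n)
    (Γn : Set ℕ) (hΓn : Γn = ⋃ i, (fun γ => n i + γ) '' Γ) :
    ((Γ \ Γn).ncard : ℤ)
      = (n ⟨0, hk⟩ : ℤ) - (δ : ℤ)
        + (((⋃ i, (fun γ => (n i - n ⟨0, hk⟩) + γ) '' Γ)ᶜ : Set ℕ).ncard : ℤ) := by
  rw [Nat.setOf_add_mul_eq_closure_pair] at hΓ
  subst hΓ hδ hΓn
  set S := AddSubmonoid.closure {p, q}
  set n₀ := n ⟨0, hk⟩
  set U := ⋃ i, (fun γ => (n i - n₀) + γ) '' (S : Set ℕ)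
  have hSU : (S : Set ℕ) ⊆ U := fun x hx => mem_iUnion.2 ⟨⟨0, hk⟩, x, hx, by simp [n₀]⟩
  have hU : Uᶜ.Finite := (Nat.finite_compl_closure_pair hpq).subset (compl_subset_compl.2 hSU)
  have hΓn : ⋃ i, (fun γ => n i + γ) '' (S : Set ℕ) = (fun x => n₀ + x) '' U :=
    Nat.iUnion_image_add_eq_image_iUnion _ fun i => hmono (Nat.zero_le _)
  have hcount :
      ((S : Set ℕ) \ (fun x => n₀ + x) '' U).ncard + (Sᶜ : Set ℕ).ncard = n₀ + Uᶜ.ncard := by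
    rw [← Nat.ncard_compl_image_add_left n₀ hU, ← hΓn]
    exact ncard_sdiff_add_ncard_compl_of_subset (S.iUnion_image_add_subset hnΓ)
      (hΓn ▸ Nat.finite_compl_image_add_left n₀ hU)
  rw [hΓn]
  omega

/-- Colength formula for the semigroup ideal generated by an independent tuple
`n_1 ≤ … ≤ n_k` in `Γ = ⟨p,q⟩`:
`|Γ \ Γ_n| = n_1 − δ + |ℕ \ ⋃_i ((n_i − n_1) + Γ)|`. -/
theorem stmt12 (p q : ℕ) (hp : 2 ≤ p) (hq : 2 ≤ q) (hpq : Nat.Coprime p q)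
    (Γ : Set ℕ) (hΓ : Γ = {m | ∃ a b : ℕ, m = a * p + b * q})
    (δ : ℕ) (hδ : δ = (Γᶜ : Set ℕ).ncard)
    (k : ℕ) (hk : 0 < k) (n : Fin k → ℕ) (hnΓ : ∀ i, n i ∈ Γ)
    (hmono : Monotone n)
    (Γn : Set ℕ) (hΓn : Γn = ⋃ i, (fun γ => n i + γ) '' Γ)
    (hind : ∀ i, ¬ Γn ⊆ ⋃ j ∈ {j : Fin k | j ≠ i}, (fun γ => n j + γ) '' Γ) :
    ((Γ \ Γn).ncard : ℤ)
      = (n ⟨0, hk⟩ : ℤ) - (δ : ℤ)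
        + (((⋃ i, (fun γ => (n i - n ⟨0, hk⟩) + γ) '' Γ)ᶜ : Set ℕ).ncard : ℤ) :=
  stmt12_general p q hpq Γ hΓ δ hδ k hk n hnΓ hmono Γn hΓn
end

section
/- Let f = x^2 − y^3 and n ≥ 6. Then there exists an arc γ = (γ_1, γ_2) ∈ (K[[t]])^2 with γ_i(0) = 0 such that val_t(γ_1^2 − γ_2^3) = n. Moreover such arcs exist for every n ∈ {2,3,4,6,7,8,…} = the set of orders kN_i and mixed sums from the resolution data (2,1),(3,2),(6,4). -/
/-!
Each listed `n` is realized by an arc with `γ₁² − γ₂³ = tⁿ u`, `u(0) ≠ 0`: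
`(t, 0)`, `(0, t)`, `(t², 0)` give `n = 2, 3, 4`, and for `n ≥ 6`
`(t³ + t^(n-3))² − (t²)³ = tⁿ (2 + t^(n-6))`, whose unit factor has constant term `2` or `3`,
nonzero in characteristic zero.
-/

open PowerSeries

theorem valt_eq_of_order_eq {R : Type*} [Semiring R] {f : R⟦X⟧} {n : ℕ}
    (h : f.order = n) : valt f = n := by
  obtain ⟨hn, hlt⟩ := order_eq_nat.mp h
  exact le_antisymm (Nat.sInf_le hn) (le_csInf ⟨n, hn⟩ fun m hm ↦ not_lt.mp (hm ∘ hlt m))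

section Domain

variable {R : Type*} [CommRing R] [IsDomain R] {u : R⟦X⟧}

theorem order_X_pow_mul_of_constantCoeff_ne_zero (hu : constantCoeff u ≠ 0) (n : ℕ) :
    order (X ^ n * u) = n := by
  have hu₀ : u.order = 0 := not_not.mp (mt order_ne_zero_iff_constCoeff_eq_zero.mp hu)
  rw [order_mul, order_X_pow, hu₀, add_zero]

theorem X_pow_mul_ne_zero_and_valt_eq (hu : constantCoeff u ≠ 0) (n : ℕ) :
    X ^ n * u ≠ 0 ∧ valt (X ^ n * u) = n := by
  have horder := order_X_pow_mul_of_constantCoeff_ne_zero hu n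
  exact ⟨order_eq_top.not.mp (horder ▸ ENat.natCast_ne_top n), valt_eq_of_order_eq horder⟩

end Domain

/-- Nonemptiness of contact loci of the cusp `x² − y³`: for every
`n ∈ {2,3,4} ∪ {n : n ≥ 6}` there exists an arc `(γ₁, γ₂)` with `γ_i(0) = 0` and
`val_t(γ₁² − γ₂³) = n`. -/
theorem stmt15 {K : Type*} [Field K] [CharZero K] (n : ℕ)
    (hn : 6 ≤ n ∨ n = 2 ∨ n = 3 ∨ n = 4) :
    ∃ γ₁ γ₂ : PowerSeries K,
      PowerSeries.coeff 0 γ₁ = 0 ∧ PowerSeries.coeff 0 γ₂ = 0 ∧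
      γ₁ ^ 2 - γ₂ ^ 3 ≠ 0 ∧ valt (γ₁ ^ 2 - γ₂ ^ 3) = n := by
  rcases hn with hn | rfl | rfl | rfl
  · obtain ⟨m, rfl⟩ : ∃ m, n = m + 6 := ⟨n - 6, by omega⟩
    refine ⟨X ^ 3 + X ^ (m + 3), X ^ 2, by simp, by simp, ?_⟩
    rw [show (X ^ 3 + X ^ (m + 3) : K⟦X⟧) ^ 2 - (X ^ 2) ^ 3 = X ^ (m + 6) * (2 + X ^ m) by ring]
    refine X_pow_mul_ne_zero_and_valt_eq ?_ _
    rcases m with _ | m <;> norm_num [map_ofNat]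
  · refine ⟨X, 0, by simp, by simp, ?_⟩
    rw [show (X : K⟦X⟧) ^ 2 - 0 ^ 3 = X ^ 2 * 1 by ring]
    exact X_pow_mul_ne_zero_and_valt_eq (by simp) _
  · refine ⟨0, X, by simp, by simp, ?_⟩
    rw [show (0 : K⟦X⟧) ^ 2 - X ^ 3 = X ^ 3 * -1 by ring]
    exact X_pow_mul_ne_zero_and_valt_eq (by simp) _
  · refine ⟨X ^ 2, 0, by simp, by simp, ?_⟩
    rw [show (X ^ 2 : K⟦X⟧) ^ 2 - 0 ^ 3 = X ^ 4 * 1 by ring]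
    exact X_pow_mul_ne_zero_and_valt_eq (by simp) _
end
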